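/- arXiv:math/9509216 — 6 statements merged into one kernel-verified Lean document; each statement's English description precedes it below -/
import Mathlib

section
/- Let X be a real Banach space, let k be a positive integer or ∞, and suppose there exist a real number R > 1 and a function ψ : X → ℝ of class C^k with 0 ≤ ψ ≤ 1, ψ(x) = 0 whenever ‖x‖ ≤ 1 and ψ(x) = 1 whenever ‖x‖ ≥ R. Then there is a function θ : X → ℝ of class C^k such that θ(x) → ∞ as ‖x‖ → ∞. -/
/-- If a real Banach space `X` carries a `C^k` function `ψ` with
`0 ≤ ψ ≤ 1`, `ψ x = 0` for `‖x‖ ≤ 1` and `ψ x = 1` for `‖x‖ ≥ R` (some `R > 1`),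
then there is a `C^k` function `θ : X → ℝ` with `θ x → ∞` as `‖x‖ → ∞`. -/
theorem plateau_to_coercive
    (X : Type*) [NormedAddCommGroup X] [NormedSpace ℝ X] [CompleteSpace X]
    (k : ℕ∞) (hk : 1 ≤ k)
    (R : ℝ) (hR : 1 < R)
    (ψ : X → ℝ) (hψ : ContDiff ℝ k ψ)
    (hψ01 : ∀ x, 0 ≤ ψ x ∧ ψ x ≤ 1)
    (hψ0 : ∀ x, ‖x‖ ≤ 1 → ψ x = 0)
    (hψ1 : ∀ x, R ≤ ‖x‖ → ψ x = 1) :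
    ∃ θ : X → ℝ, ContDiff ℝ k θ ∧ ∀ M : ℝ, ∃ r : ℝ, ∀ x, r ≤ ‖x‖ → M ≤ θ x := by
  have hR0 : (0:ℝ) < R := lt_trans one_pos hR
  have hR1 : (1:ℝ) ≤ R := hR.le
  set f : ℕ → X → ℝ := fun n x => ψ ((R ^ n)⁻¹ • x) with hf
  have hnorm : ∀ (n : ℕ) (x : X), ‖(R ^ n)⁻¹ • x‖ = ‖x‖ / R ^ n := by
    intro n x
    rw [norm_smul, norm_inv, Real.norm_of_nonneg (pow_nonneg hR0.le n)]
    ring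
  have hzero : ∀ (n : ℕ) (x : X), ‖x‖ ≤ R ^ n → f n x = 0 := by
    intro n x h
    apply hψ0
    rw [hnorm, div_le_one (pow_pos hR0 n)]
    exact h
  have hone : ∀ (n : ℕ) (x : X), R ^ (n + 1) ≤ ‖x‖ → f n x = 1 := by
    intro n x h
    apply hψ1
    rw [hnorm, le_div_iff₀ (pow_pos hR0 n)]
    calc R * R ^ n = R ^ (n + 1) := by ring
      _ ≤ ‖x‖ := h
  have hfin : ∀ (N : ℕ) (y : X), ‖y‖ < R ^ N →
      (∑' n, f n y) = ∑ n ∈ Finset.range N, f n y := by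
    intro N y hy
    apply tsum_eq_sum
    intro n hn
    apply hzero
    have hNn : N ≤ n := by simpa using hn
    have : R ^ N ≤ R ^ n := pow_le_pow_right₀ hR1 hNn
    linarith
  refine ⟨fun x => ∑' n, f n x, ?_, ?_⟩
  · rw [contDiff_iff_contDiffAt]
    intro x
    obtain ⟨N, hN⟩ : ∃ N : ℕ, ‖x‖ < R ^ N := pow_unbounded_of_one_lt ‖x‖ hR
    have hsmooth : ContDiff ℝ k (fun y : X => ∑ n ∈ Finset.range N, f n y) := by
      apply ContDiff.sum
      intro n _
      exact hψ.comp (contDiff_id.const_smul _)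
    apply hsmooth.contDiffAt.congr_of_eventuallyEq
    have hopen : IsOpen {y : X | ‖y‖ < R ^ N} := isOpen_lt continuous_norm continuous_const
    exact Filter.eventually_of_mem (hopen.mem_nhds hN) (fun y hy => hfin N y hy)
  · intro M
    obtain ⟨N, hMN⟩ : ∃ N : ℕ, M ≤ N := exists_nat_ge M
    refine ⟨R ^ N, fun x hx => ?_⟩
    obtain ⟨N', hN'⟩ : ∃ N' : ℕ, ‖x‖ < R ^ N' := pow_unbounded_of_one_lt ‖x‖ hR
    have hlt : ‖x‖ < R ^ max N N' :=
      lt_of_lt_of_le hN' (pow_le_pow_right₀ hR1 (le_max_right _ _))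
    have heq := hfin (max N N') x hlt
    have hsub : Finset.range N ⊆ Finset.range (max N N') :=
      Finset.range_subset_range.2 (le_max_left _ _)
    have hge : (N : ℝ) ≤ ∑ n ∈ Finset.range (max N N'), f n x := by
      have h1 : ∑ n ∈ Finset.range N, f n x = N := by
        have hall : ∀ n ∈ Finset.range N, f n x = 1 := fun n hn =>
          hone n x (le_trans (pow_le_pow_right₀ hR1 (Finset.mem_range.1 hn)) hx)
        rw [Finset.sum_congr rfl hall]
        simp
      have h2 : ∑ n ∈ Finset.range N, f n x ≤ ∑ n ∈ Finset.range (max N N'), f n x :=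
        Finset.sum_le_sum_of_subset_of_nonneg hsub (fun n _ _ => (hψ01 _).1)
      linarith
    calc M ≤ (N : ℝ) := hMN
      _ ≤ _ := by show (N:ℝ) ≤ ∑' n, f n x; rw [heq]; exact hge
end

section
/- Let X be a real Banach space, let k be a positive integer or ∞, and suppose there is a function θ : X → ℝ of class C^k such that θ(x) → ∞ as ‖x‖ → ∞. Then X admits a bump function of class C^k. -/
/-- If a real Banach space `X` carries a `C^k` function `θ : X → ℝ`
with `θ x → ∞` as `‖x‖ → ∞`, then `X` admits a `C^k` bump function. -/
theorem coercive_to_bump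
    (X : Type*) [NormedAddCommGroup X] [NormedSpace ℝ X] [CompleteSpace X]
    (k : ℕ∞) (hk : 1 ≤ k)
    (θ : X → ℝ) (hθ : ContDiff ℝ k θ)
    (hθ_coercive : ∀ M : ℝ, ∃ r : ℝ, ∀ x, r ≤ ‖x‖ → M ≤ θ x) :
    ∃ φ : X → ℝ, ContDiff ℝ k φ ∧ Bornology.IsBounded (Function.support φ) ∧
      (Function.support φ).Nonempty := by
  obtain ⟨r, hr⟩ := hθ_coercive (θ 0 + 2)
  refine ⟨fun x => Real.smoothTransition (θ 0 + 2 - θ x), ?_, ?_, ?_⟩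
  · exact ((Real.smoothTransition.contDiff (n := k))).comp
      ((contDiff_const.sub hθ))
  · apply Bornology.IsBounded.subset (Metric.isBounded_ball (x := (0 : X)) (r := |r| + 1))
    intro x hx
    simp only [Function.mem_support] at hx
    have h1 : 0 < θ 0 + 2 - θ x := by
      by_contra h
      exact hx (Real.smoothTransition.zero_of_nonpos (le_of_not_gt h))
    have h2 : ¬ (r ≤ ‖x‖) := fun h => by have := hr x h; linarith
    simp only [Metric.mem_ball, dist_zero_right]
    have : ‖x‖ < r := lt_of_not_ge h2
    calc ‖x‖ < r := this
      _ ≤ |r| := le_abs_self r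
      _ < |r| + 1 := by linarith
  · refine ⟨0, ?_⟩
    simp only [Function.mem_support, sub_self]
    rw [show θ 0 + 2 - θ 0 = 2 by ring]
    rw [Real.smoothTransition.one_of_one_le (by norm_num)]
    norm_num
end

section
/- Let N be a finite set and η > 0, and let W be the set of pairs (f, x) ∈ ℝ^N × ℝ^N such that max_{t∈N}(|f_t| + ½|x_t|) > max{max_{t∈N}|f_t|, max_{t∈N}|x_t|} + η. Define F(f, x, c) = exp(−Σ_{t∈N} c_t) · Σ_{t∈N} (c_t|f_t| + θ(c_t)|x_t|) for c ∈ [0,∞)^N and G(f, x) = sup_{c ∈ [0,∞)^N} F(f, x, c). Then for every (f, x) ∈ W the supremum defining G(f, x) is attained at a unique c ∈ [0,∞)^N, and this c satisfies c_t = 0 whenever |f_t| ≤ η or |x_t| ≤ η. -/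
/-- `F(f, x, c) = exp(−Σ_t c_t) · Σ_t (c_t|f_t| + θ(c_t)|x_t|)`. -/
noncomputable def lemmaTwoF {N : Type*} [Fintype N] (θ : ℝ → ℝ) (f x c : N → ℝ) : ℝ :=
  Real.exp (-(∑ t, c t)) * ∑ t, (c t * |f t| + θ (c t) * |x t|)

/-- `G(f, x) = sup_{c ∈ [0,∞)^N} F(f, x, c)`. -/
noncomputable def lemmaTwoG {N : Type*} [Fintype N] (θ : ℝ → ℝ) (f x : N → ℝ) : ℝ :=
  ⨆ c : {c : N → ℝ // ∀ t, 0 ≤ c t}, lemmaTwoF θ f x c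

open MeasureTheory Set Filter

namespace LemmaTwoAux

variable {w θ : ℝ → ℝ}

lemma winv_integrable (hw_cont : ContinuousOn w (Set.Ioi 0))
    (hw_maps : ∀ v > (0:ℝ), w v ∈ Set.Ioo 1 2) {u v : ℝ} (hu : 0 ≤ u) (huv : u ≤ v) :
    IntervalIntegrable (fun s => (w s)⁻¹) MeasureTheory.volume u v := by
  rw [intervalIntegrable_iff, Set.uIoc_of_le huv]
  have hsub : Set.Ioc u v ⊆ Set.Ioi 0 := fun s hs => lt_of_le_of_lt hu hs.1
  have hcont : ContinuousOn (fun s => (w s)⁻¹) (Set.Ioc u v) :=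
    (hw_cont.mono hsub).inv₀ (fun s hs =>
      ne_of_gt (lt_trans zero_lt_one (hw_maps s (hsub hs)).1))
  refine MeasureTheory.Integrable.mono' (g := fun _ => (1:ℝ))
    (integrableOn_const measure_Ioc_lt_top.ne)
    (hcont.aestronglyMeasurable measurableSet_Ioc) ?_
  refine (MeasureTheory.ae_restrict_mem measurableSet_Ioc).mono (fun s hs => ?_)
  have h1 := (hw_maps s (hsub hs)).1
  rw [Real.norm_eq_abs, abs_of_nonneg (inv_nonneg.mpr (by linarith))]
  exact inv_le_one_of_one_le₀ (by linarith)

lemma theta_zero (hθ_def : ∀ c : ℝ, θ c = ∫ v in (0:ℝ)..c, (w v)⁻¹) : θ 0 = 0 := by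
  rw [hθ_def]; simp

lemma theta_incr (hw_cont : ContinuousOn w (Set.Ioi 0))
    (hw_maps : ∀ v > (0:ℝ), w v ∈ Set.Ioo 1 2)
    (hθ_def : ∀ c : ℝ, θ c = ∫ v in (0:ℝ)..c, (w v)⁻¹)
    {u h : ℝ} (hu : 0 ≤ u) (hh : 0 ≤ h) :
    h/2 ≤ θ (u+h) - θ u ∧ θ (u+h) - θ u ≤ h := by
  have hI1 : IntervalIntegrable (fun s => (w s)⁻¹) MeasureTheory.volume 0 u :=
    winv_integrable hw_cont hw_maps le_rfl hu
  have hI2 : IntervalIntegrable (fun s => (w s)⁻¹) MeasureTheory.volume u (u+h) :=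
    winv_integrable hw_cont hw_maps hu (by linarith)
  have key : θ (u+h) - θ u = ∫ v in u..(u+h), (w v)⁻¹ := by
    rw [hθ_def, hθ_def, ← intervalIntegral.integral_add_adjacent_intervals hI1 hI2]
    ring
  have hne : ∀ᵐ (s:ℝ) ∂(MeasureTheory.volume.restrict (Set.Icc u (u+h))), s ≠ 0 := by
    refine MeasureTheory.ae_restrict_of_ae ?_
    rw [MeasureTheory.ae_iff]
    have : {x : ℝ | ¬ x ≠ 0} = {0} := by ext y; simp
    rw [this]
    exact Real.volume_singleton
  have hmem := MeasureTheory.ae_restrict_mem (μ := MeasureTheory.volume)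
    (measurableSet_Icc (a := u) (b := u+h))
  have hboth := hmem.and hne
  have hfacts : ∀ s : ℝ, s ∈ Set.Icc u (u+h) ∧ s ≠ 0 →
      (1:ℝ)/2 ≤ (w s)⁻¹ ∧ (w s)⁻¹ ≤ 1 := by
    intro s hs
    have hspos : 0 < s := lt_of_le_of_ne (le_trans hu hs.1.1) (Ne.symm hs.2)
    have h1 := (hw_maps s hspos).1
    have h2 := (hw_maps s hspos).2
    have hab : (w s) * (w s)⁻¹ = 1 := mul_inv_cancel₀ (by linarith)
    have hbpos : 0 < (w s)⁻¹ := inv_pos.mpr (by linarith)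
    constructor <;> nlinarith
  constructor
  · have hlow : (∫ v in u..(u+h), (fun _ => (1:ℝ)/2) v) ≤ ∫ v in u..(u+h), (w v)⁻¹ :=
      intervalIntegral.integral_mono_ae_restrict (by linarith)
        intervalIntegrable_const hI2 (hboth.mono (fun s hs => (hfacts s hs).1))
    rw [intervalIntegral.integral_const, smul_eq_mul] at hlow
    rw [key]; linarith [hlow]
  · have hup : (∫ v in u..(u+h), (w v)⁻¹) ≤ ∫ v in u..(u+h), (fun _ => (1:ℝ)) v :=
      intervalIntegral.integral_mono_ae_restrict (by linarith)
        hI2 intervalIntegrable_const (hboth.mono (fun s hs => (hfacts s hs).2))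
    rw [intervalIntegral.integral_const, smul_eq_mul] at hup
    rw [key]; linarith [hup]

lemma theta_hasDeriv (hw_cont : ContinuousOn w (Set.Ioi 0))
    (hw_maps : ∀ v > (0:ℝ), w v ∈ Set.Ioo 1 2)
    (hθ_def : ∀ c : ℝ, θ c = ∫ v in (0:ℝ)..c, (w v)⁻¹)
    {v : ℝ} (hv : 0 < v) : HasDerivAt θ ((w v)⁻¹) v := by
  have hθ : θ = fun u => ∫ s in (0:ℝ)..u, (w s)⁻¹ := funext hθ_def
  rw [hθ]
  have hcont : ContinuousOn (fun s => (w s)⁻¹) (Set.Ioi 0) :=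
    hw_cont.inv₀ (fun s hs => ne_of_gt (lt_trans zero_lt_one (hw_maps s hs).1))
  exact intervalIntegral.integral_hasDerivAt_right
    (winv_integrable hw_cont hw_maps le_rfl hv.le)
    ⟨Set.Ioi 0, isOpen_Ioi.mem_nhds hv, hcont.aestronglyMeasurable measurableSet_Ioi⟩
    (hcont.continuousAt (isOpen_Ioi.mem_nhds hv))

lemma theta_contOn (hw_cont : ContinuousOn w (Set.Ioi 0))
    (hw_maps : ∀ v > (0:ℝ), w v ∈ Set.Ioo 1 2)
    (hθ_def : ∀ c : ℝ, θ c = ∫ v in (0:ℝ)..c, (w v)⁻¹) :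
    ContinuousOn θ (Set.Ici 0) := by
  intro c hc
  rcases eq_or_lt_of_le (Set.mem_Ici.mp hc : (0:ℝ) ≤ c) with h0 | hpos
  · subst h0
    unfold ContinuousWithinAt
    rw [theta_zero hθ_def]
    refine squeeze_zero' ?_ ?_ (tendsto_id.mono_left nhdsWithin_le_nhds)
    · refine eventually_nhdsWithin_of_forall (fun s hs => ?_)
      have hs' : (0:ℝ) ≤ s := hs
      have := (theta_incr hw_cont hw_maps hθ_def le_rfl hs').1
      rw [zero_add, theta_zero hθ_def] at this
      linarith
    · refine eventually_nhdsWithin_of_forall (fun s hs => ?_)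
      have hs' : (0:ℝ) ≤ s := hs
      have := (theta_incr hw_cont hw_maps hθ_def le_rfl hs').2
      rw [zero_add, theta_zero hθ_def] at this
      simp only [id]
      linarith
  · exact (theta_hasDeriv hw_cont hw_maps hθ_def hpos).continuousAt.continuousWithinAt

lemma theta_strictConcave (hw_cont : ContinuousOn w (Set.Ioi 0))
    (hw_mono : StrictMonoOn w (Set.Ioi 0))
    (hw_maps : ∀ v > (0:ℝ), w v ∈ Set.Ioo 1 2)
    (hθ_def : ∀ c : ℝ, θ c = ∫ v in (0:ℝ)..c, (w v)⁻¹) :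
    StrictConcaveOn ℝ (Set.Ici 0) θ := by
  refine StrictAntiOn.strictConcaveOn_of_deriv (convex_Ici 0)
    (theta_contOn hw_cont hw_maps hθ_def) ?_
  rw [interior_Ici]
  intro p hp q hq hpq
  rw [(theta_hasDeriv hw_cont hw_maps hθ_def hp).deriv,
      (theta_hasDeriv hw_cont hw_maps hθ_def hq).deriv]
  have h1 := (hw_maps p hp).1
  exact inv_strictAnti₀ (by linarith) (hw_mono hp hq hpq)

lemma sum_update_update {M : Type*} [Fintype M] [DecidableEq M] (ψ : M → ℝ → ℝ) (c : M → ℝ)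
    {t1 t2 : M} (h : t1 ≠ t2) (y1 y2 : ℝ) :
    ∑ s, ψ s (Function.update (Function.update c t1 y1) t2 y2 s)
      = ∑ s, ψ s (c s) - ψ t1 (c t1) - ψ t2 (c t2) + ψ t1 y1 + ψ t2 y2 := by
  have key : ∀ d : M → ℝ, ∑ s, ψ s (d s)
      = ψ t1 (d t1) + (ψ t2 (d t2) + ∑ s ∈ (Finset.univ.erase t1).erase t2, ψ s (d s)) := by
    intro d
    rw [Finset.add_sum_erase _ (fun s => ψ s (d s))
        (Finset.mem_erase.mpr ⟨h.symm, Finset.mem_univ t2⟩),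
      Finset.add_sum_erase _ (fun s => ψ s (d s)) (Finset.mem_univ t1)]
  rw [key, key c]
  have e1 : Function.update (Function.update c t1 y1) t2 y2 t1 = y1 := by
    rw [Function.update_of_ne h, Function.update_self]
  have e2 : Function.update (Function.update c t1 y1) t2 y2 t2 = y2 := Function.update_self _ _ _
  have e3 : ∑ s ∈ (Finset.univ.erase t1).erase t2,
      ψ s (Function.update (Function.update c t1 y1) t2 y2 s)
      = ∑ s ∈ (Finset.univ.erase t1).erase t2, ψ s (c s) := by
    refine Finset.sum_congr rfl (fun s hs => ?_)
    have hs1 : s ≠ t2 := (Finset.mem_erase.mp hs).1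
    have hs2 : s ≠ t1 := (Finset.mem_erase.mp (Finset.mem_erase.mp hs).2).1
    rw [Function.update_of_ne hs1, Function.update_of_ne hs2]
  rw [e1, e2, e3]
  ring

end LemmaTwoAux

set_option maxHeartbeats 1600000

/-- Lemma 2, first part: if `(f, x) ∈ W`, i.e.
`max_t (|f_t| + ½|x_t|) > max (max_t |f_t|) (max_t |x_t|) + η`, then the
supremum defining `G(f, x)` is attained at a unique `c ∈ [0,∞)^N`, and this `c`
satisfies `c_t = 0` whenever `|f_t| ≤ η` or `|x_t| ≤ η`. -/
theorem lemmaTwo_unique_maximizer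
    (ϖ w : ℝ → ℝ)
    (hϖ_smooth : ContDiffOn ℝ (⊤ : ℕ∞) ϖ (Set.Ico 0 2))
    (hϖ_zero : ∀ u ∈ Set.Icc (0:ℝ) 1, ϖ u = 0)
    (hϖ_mono : StrictMonoOn ϖ (Set.Ico 1 2))
    (hϖ_nonneg : ∀ u ∈ Set.Ico (0:ℝ) 2, 0 ≤ ϖ u)
    (hϖ_tendsto : Filter.Tendsto ϖ (nhdsWithin 2 (Set.Iio 2)) Filter.atTop)
    (hw_smooth : ContDiffOn ℝ (⊤ : ℕ∞) w (Set.Ioi 0))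
    (hw_mono : StrictMonoOn w (Set.Ioi 0))
    (hw_maps : ∀ v > (0:ℝ), w v ∈ Set.Ioo 1 2)
    (hw_onto : ∀ u ∈ Set.Ioo (1:ℝ) 2, ∃ v > (0:ℝ), w v = u)
    (hw_left : ∀ v > (0:ℝ), ϖ (w v) = v)
    (hw_right : ∀ u ∈ Set.Ioo (1:ℝ) 2, w (ϖ u) = u)
    (θ : ℝ → ℝ)
    (hθ_def : ∀ c : ℝ, θ c = ∫ v in (0:ℝ)..c, (w v)⁻¹)
    (N : Type*) [Fintype N] [Nonempty N]
    (η : ℝ) (hη : 0 < η)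
    (f x : N → ℝ)
    (hW : max (⨆ t, |f t|) (⨆ t, |x t|) + η < ⨆ t, (|f t| + 2⁻¹ * |x t|)) :
    ∃ c : N → ℝ, (∀ t, 0 ≤ c t) ∧
      lemmaTwoF θ f x c = lemmaTwoG θ f x ∧
      (∀ t, (|f t| ≤ η ∨ |x t| ≤ η) → c t = 0) ∧
      (∀ c' : N → ℝ, (∀ t, 0 ≤ c' t) →
        lemmaTwoF θ f x c' = lemmaTwoG θ f x → c' = c) := by
  classical
  have hw_cont : ContinuousOn w (Set.Ioi 0) := hw_smooth.continuousOn
  have hθ0 : θ 0 = 0 := LemmaTwoAux.theta_zero hθ_def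
  have hincr : ∀ u h : ℝ, 0 ≤ u → 0 ≤ h → h/2 ≤ θ (u+h) - θ u :=
    fun u h hu hh => (LemmaTwoAux.theta_incr hw_cont hw_maps hθ_def hu hh).1
  have hθle : ∀ y : ℝ, 0 ≤ y → θ y ≤ y := by
    intro y hy
    have := (LemmaTwoAux.theta_incr hw_cont hw_maps hθ_def le_rfl hy).2
    rw [zero_add, hθ0] at this; linarith
  have hθge : ∀ y : ℝ, 0 ≤ y → y/2 ≤ θ y := by
    intro y hy
    have := hincr 0 y le_rfl hy
    rw [zero_add, hθ0] at this; linarith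
  have hθnn : ∀ y : ℝ, 0 ≤ y → 0 ≤ θ y := fun y hy => le_trans (by linarith) (hθge y hy)
  have hconc := LemmaTwoAux.theta_strictConcave hw_cont hw_mono hw_maps hθ_def
  -- sup facts
  have hA : ∀ t, |f t| ≤ ⨆ t, |f t| :=
    fun t => le_ciSup (f := fun t => |f t|) (Set.Finite.bddAbove (Set.finite_range _)) t
  have hB : ∀ t, |x t| ≤ ⨆ t, |x t| :=
    fun t => le_ciSup (f := fun t => |x t|) (Set.Finite.bddAbove (Set.finite_range _)) t
  obtain ⟨tstar, htM⟩ := exists_eq_ciSup_of_finite (f := fun t => |f t| + 2⁻¹ * |x t|)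
  have hAM : (⨆ t, |f t|) + η < |f tstar| + 2⁻¹ * |x tstar| := by
    rw [htM]
    exact lt_of_le_of_lt (add_le_add (le_max_left _ _) le_rfl) hW
  have hBM : (⨆ t, |x t|) + η < |f tstar| + 2⁻¹ * |x tstar| := by
    rw [htM]
    exact lt_of_le_of_lt (add_le_add (le_max_right _ _) le_rfl) hW
  have hfstar : η < |f tstar| := by
    have h1 := hB tstar; have h2 := abs_nonneg (x tstar); linarith
  have hxstar : 2*η < |x tstar| := by
    have h1 := hA tstar; linarith
  -- g
  set g : (N → ℝ) → ℝ := fun c => ∑ t, (c t * |f t| + θ (c t) * |x t|) with hg_def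
  have hFg : ∀ c : N → ℝ, lemmaTwoF θ f x c = Real.exp (-(∑ t, c t)) * g c := fun c => rfl
  have hg_ub : ∀ c : N → ℝ, (∀ t, 0 ≤ c t) → g c ≤ (∑ t, c t) * (∑ t, (|f t| + |x t|)) := by
    intro c hc
    have h1 : ∀ t, c t * |f t| + θ (c t) * |x t| ≤ (∑ s, c s) * (|f t| + |x t|) := by
      intro t
      have hle : c t ≤ ∑ s, c s := Finset.single_le_sum (fun s _ => hc s) (Finset.mem_univ t)
      have h2 : θ (c t) ≤ c t := hθle _ (hc t)
      have h3 : 0 ≤ |x t| := abs_nonneg _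
      have h4 : 0 ≤ |f t| := abs_nonneg _
      nlinarith [hθnn (c t) (hc t), hc t]
    calc g c ≤ ∑ t, (∑ s, c s) * (|f t| + |x t|) := Finset.sum_le_sum (fun t _ => h1 t)
      _ = (∑ t, c t) * (∑ t, (|f t| + |x t|)) := by rw [← Finset.mul_sum]
  have hg_nn : ∀ c : N → ℝ, (∀ t, 0 ≤ c t) → 0 ≤ g c := by
    intro c hc
    refine Finset.sum_nonneg (fun t _ => ?_)
    exact add_nonneg (mul_nonneg (hc t) (abs_nonneg _))
      (mul_nonneg (hθnn (c t) (hc t)) (abs_nonneg _))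
  -- test point c1
  set c1 : N → ℝ := fun s => if s = tstar then 1 else 0 with hc1_def
  have hc1nn : ∀ t, 0 ≤ c1 t := by
    intro t; by_cases h : t = tstar <;> simp [hc1_def, h]
  have hc1sum : ∑ t, c1 t = 1 := by simp [hc1_def]
  have hc1g : g c1 = |f tstar| + θ 1 * |x tstar| := by
    simp only [hg_def]
    have he : ∀ s, c1 s * |f s| + θ (c1 s) * |x s|
        = if s = tstar then |f tstar| + θ 1 * |x tstar| else 0 := by
      intro s; by_cases h : s = tstar
      · subst h; simp [hc1_def]
      · simp [hc1_def, h, hθ0]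
    rw [Finset.sum_congr rfl (fun s _ => he s)]
    simp
  have hFc1 : lemmaTwoF θ f x c1 = Real.exp (-1) * (|f tstar| + θ 1 * |x tstar|) := by
    rw [hFg, hc1sum, hc1g]
  have hε0 : 0 < lemmaTwoF θ f x c1 := by
    rw [hFc1]
    have h1 : (1:ℝ)/2 ≤ θ 1 := hθge 1 one_pos.le
    have h2 := abs_nonneg (x tstar)
    have h3 := Real.exp_pos (-1:ℝ)
    have h4 : (0:ℝ) ≤ θ 1 * |x tstar| := mul_nonneg (by linarith) h2
    exact mul_pos h3 (by linarith)
  -- radius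
  have htend : Filter.Tendsto (fun k : ℝ => k ^ 1 * Real.exp (-k) * (∑ t, (|f t| + |x t|)))
      Filter.atTop (nhds 0) := by
    simpa using (Real.tendsto_pow_mul_exp_neg_atTop_nhds_zero 1).mul_const
      (∑ t, (|f t| + |x t|))
  obtain ⟨R0, hR0⟩ := Filter.eventually_atTop.mp (htend.eventually_lt_const hε0)
  set R : ℝ := max R0 1 with hR_def
  have hR1 : (1:ℝ) ≤ R := le_max_right _ _
  set K : Set (N → ℝ) := Set.Icc 0 (fun _ => R) with hK_def
  have hKc : IsCompact K := isCompact_Icc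
  have hKne : K.Nonempty :=
    ⟨0, Set.mem_Icc.mpr ⟨le_rfl, fun t => by simpa using (by linarith : (0:ℝ) ≤ R)⟩⟩
  have hFcont : ContinuousOn (fun c => lemmaTwoF θ f x c) K := by
    have hexp : Continuous fun c : N → ℝ => Real.exp (-(∑ t, c t)) :=
      Real.continuous_exp.comp (continuous_finset_sum _ (fun t _ => continuous_apply t)).neg
    refine hexp.continuousOn.mul ?_
    refine continuousOn_finset_sum _ (fun t _ => ?_)
    refine ContinuousOn.add (((continuous_apply t).continuousOn).mul continuousOn_const) ?_
    refine ContinuousOn.mul ?_ continuousOn_const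
    refine (LemmaTwoAux.theta_contOn hw_cont hw_maps hθ_def).comp
      ((continuous_apply t).continuousOn) ?_
    intro c hc
    exact Set.mem_Ici.mpr (by simpa using (Set.mem_Icc.mp hc).1 t)
  obtain ⟨c0, hc0K, hc0max⟩ := hKc.exists_isMaxOn hKne hFcont
  have hc0nn : ∀ t, 0 ≤ c0 t := fun t => by simpa using (Set.mem_Icc.mp hc0K).1 t
  have hc1K : c1 ∈ K := by
    refine Set.mem_Icc.mpr ⟨fun t => by simpa using hc1nn t, fun t => ?_⟩
    by_cases h : t = tstar <;> simp [hc1_def, h] <;> linarith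
  have hglobal : ∀ c : N → ℝ, (∀ t, 0 ≤ c t) → lemmaTwoF θ f x c ≤ lemmaTwoF θ f x c0 := by
    intro c hc
    by_cases hcK : c ∈ K
    · exact hc0max hcK
    · have hex : ∃ t, R < c t := by
        by_contra hno
        push_neg at hno
        exact hcK (Set.mem_Icc.mpr ⟨fun t => by simpa using hc t, fun t => by simpa using hno t⟩)
      obtain ⟨t, ht⟩ := hex
      have hs : R < ∑ s, c s :=
        lt_of_lt_of_le ht (Finset.single_le_sum (fun s _ => hc s) (Finset.mem_univ t))
      have hsR0 : R0 ≤ ∑ s, c s := le_trans (le_max_left _ _) hs.le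
      have h1 : lemmaTwoF θ f x c
          ≤ (∑ s, c s) ^ 1 * Real.exp (-(∑ s, c s)) * (∑ t, (|f t| + |x t|)) := by
        rw [hFg, pow_one]
        have hu := hg_ub c hc
        have he := Real.exp_pos (-(∑ s, c s))
        nlinarith [hg_nn c hc]
      refine le_of_lt ?_
      calc lemmaTwoF θ f x c ≤ _ := h1
        _ < lemmaTwoF θ f x c1 := hR0 _ hsR0
        _ ≤ lemmaTwoF θ f x c0 := hc0max hc1K
  haveI : Nonempty {c : N → ℝ // ∀ t, 0 ≤ c t} := ⟨⟨0, fun t => le_rfl⟩⟩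
  have hGeq : lemmaTwoG θ f x = lemmaTwoF θ f x c0 := by
    apply le_antisymm
    · exact ciSup_le (fun p => hglobal p.1 p.2)
    · refine le_ciSup (f := fun p : {c : N → ℝ // ∀ t, 0 ≤ c t} => lemmaTwoF θ f x p.1)
        ⟨lemmaTwoF θ f x c0, ?_⟩ ⟨c0, hc0nn⟩
      rintro y ⟨p, rfl⟩
      exact hglobal p.1 p.2
  -- zero condition for any maximizer
  have hzero : ∀ c : N → ℝ, (∀ t, 0 ≤ c t) →
      (∀ e : N → ℝ, (∀ t, 0 ≤ e t) → lemmaTwoF θ f x e ≤ lemmaTwoF θ f x c) →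
      ∀ t, (|f t| ≤ η ∨ |x t| ≤ η) → c t = 0 := by
    intro c hc hmax t hyp
    by_contra h0
    have hct : 0 < c t := lt_of_le_of_ne (hc t) (Ne.symm h0)
    have htne : tstar ≠ t := by
      rintro rfl
      rcases hyp with h | h <;> linarith
    set e : N → ℝ := Function.update (Function.update c tstar (c tstar + c t)) t 0 with he_def
    have hennn : ∀ s, 0 ≤ e s := by
      intro s
      rw [he_def, Function.update_apply, Function.update_apply]
      split_ifs with h1 h2
      · exact le_rfl
      · have := hc tstar; linarith
      · exact hc s
    have hesum : ∑ s, e s = ∑ s, c s := by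
      rw [he_def, LemmaTwoAux.sum_update_update (fun _ y => y) c htne]
      ring
    have hFe := hmax e hennn
    rw [hFg, hFg, hesum] at hFe
    have hge : g e ≤ g c := le_of_mul_le_mul_left hFe (Real.exp_pos _)
    have hgexp : g e = g c - (c tstar * |f tstar| + θ (c tstar) * |x tstar|)
        - (c t * |f t| + θ (c t) * |x t|)
        + ((c tstar + c t) * |f tstar| + θ (c tstar + c t) * |x tstar|)
        + ((0:ℝ) * |f t| + θ 0 * |x t|) := by
      simp only [hg_def, he_def]
      exact LemmaTwoAux.sum_update_update (fun s y => y * |f s| + θ y * |x s|) c htne _ _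
    rw [hgexp, hθ0] at hge
    have hin := hincr (c tstar) (c t) (hc tstar) (hc t)
    have hxs : (0:ℝ) ≤ |x tstar| := abs_nonneg _
    have hkey : c t * (|f tstar| + 2⁻¹ * |x tstar|) ≤ c t * |f t| + θ (c t) * |x t| := by
      linarith [mul_le_mul_of_nonneg_right hin hxs, hge]
    have hθc := hθle (c t) (hc t)
    have hθc0 := hθnn (c t) (hc t)
    rcases hyp with h | h
    · have h2 : θ (c t) * |x t| ≤ c t * (⨆ t, |x t|) := by
        have i1 := mul_le_mul_of_nonneg_right hθc (abs_nonneg (x t))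
        have i2 := mul_le_mul_of_nonneg_left (hB t) (hc t)
        linarith
      linarith [mul_lt_mul_of_pos_left hBM hct, mul_le_mul_of_nonneg_left h hct.le, hkey, h2]
    · have h2 : θ (c t) * |x t| ≤ c t * η := by
        have i1 := mul_le_mul_of_nonneg_right hθc (abs_nonneg (x t))
        have i2 := mul_le_mul_of_nonneg_left h hθc0
        have i3 := mul_le_mul_of_nonneg_left h (hc t)
        linarith [mul_le_mul hθc h (abs_nonneg (x t)) (hc t)]
      linarith [mul_lt_mul_of_pos_left hAM hct, mul_le_mul_of_nonneg_left (hA t) hct.le, hkey, h2]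
  -- uniqueness
  have huniq : ∀ c' : N → ℝ, (∀ t, 0 ≤ c' t) →
      lemmaTwoF θ f x c' = lemmaTwoG θ f x → c' = c0 := by
    intro c' hc' hFc'
    rw [hGeq] at hFc'
    by_contra hne
    obtain ⟨t0, ht0⟩ := Function.ne_iff.mp hne
    have hmax' : ∀ e : N → ℝ, (∀ t, 0 ≤ e t) → lemmaTwoF θ f x e ≤ lemmaTwoF θ f x c' := by
      intro e he; rw [hFc']; exact hglobal e he
    have hbt0 : η < |x t0| := by
      by_contra hle
      push_neg at hle
      have h1 := hzero c' hc' hmax' t0 (Or.inr hle)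
      have h2 := hzero c0 hc0nn hglobal t0 (Or.inr hle)
      exact ht0 (h1.trans h2.symm)
    set d : N → ℝ := fun s => (c' s + c0 s) / 2 with hd_def
    have hdnn : ∀ s, 0 ≤ d s := by
      intro s
      have h1 := hc' s; have h2 := hc0nn s
      simp only [hd_def]; linarith
    have hθm : ∀ s : N, c' s ≠ c0 s → (θ (c' s) + θ (c0 s))/2 < θ (d s) := by
      intro s hne'
      have h := hconc.2 (Set.mem_Ici.mpr (hc' s)) (Set.mem_Ici.mpr (hc0nn s)) hne'
        (by norm_num : (0:ℝ) < 2⁻¹) (by norm_num : (0:ℝ) < 2⁻¹) (by norm_num)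
      simp only [smul_eq_mul] at h
      have hd : d s = 2⁻¹ * c' s + 2⁻¹ * c0 s := by simp only [hd_def]; ring
      rw [hd]; linarith
    have hθmid : ∀ s : N, (θ (c' s) + θ (c0 s))/2 ≤ θ (d s) := by
      intro s
      by_cases heq : c' s = c0 s
      · have hd : d s = c0 s := by simp only [hd_def, heq]; ring
        rw [hd, heq]; linarith
      · exact (hθm s heq).le
    have hsum_lt : (g c' + g c0)/2 < g d := by
      have hcalc : (g c' + g c0)/2
          = ∑ s, ((c' s * |f s| + θ (c' s) * |x s|) + (c0 s * |f s| + θ (c0 s) * |x s|))/2 := by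
        simp only [hg_def]
        rw [← Finset.sum_add_distrib, ← Finset.sum_div]
      rw [hcalc]
      simp only [hg_def]
      refine Finset.sum_lt_sum (fun s _ => ?_) ⟨t0, Finset.mem_univ t0, ?_⟩
      · have h1 := mul_le_mul_of_nonneg_right (hθmid s) (abs_nonneg (x s))
        have hd : d s = (c' s + c0 s)/2 := by simp only [hd_def]
        rw [hd] at h1 ⊢
        nlinarith [abs_nonneg (f s)]
      · have h1 := mul_lt_mul_of_pos_right (hθm t0 ht0) (show (0:ℝ) < |x t0| by linarith)
        have hd : d t0 = (c' t0 + c0 t0)/2 := by simp only [hd_def]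
        rw [hd] at h1 ⊢
        nlinarith [abs_nonneg (f t0)]
    have hdsum : ∑ s, d s = ((∑ s, c' s) + (∑ s, c0 s))/2 := by
      rw [← Finset.sum_add_distrib, ← Finset.sum_div]
    have hFd : lemmaTwoF θ f x d
        = Real.exp (-(((∑ s, c' s) + (∑ s, c0 s))/2)) * g d := by
      rw [hFg, hdsum]
    have hEcoef1 : Real.exp (((∑ s, c' s) - (∑ s, c0 s))/2) * Real.exp (-(∑ s, c' s))
        = Real.exp (-(((∑ s, c' s) + (∑ s, c0 s))/2)) := by
      rw [← Real.exp_add]; congr 1; ring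
    have hEcoef2 : Real.exp (((∑ s, c0 s) - (∑ s, c' s))/2) * Real.exp (-(∑ s, c0 s))
        = Real.exp (-(((∑ s, c' s) + (∑ s, c0 s))/2)) := by
      rw [← Real.exp_add]; congr 1; ring
    have h2 : Real.exp (-(((∑ s, c' s) + (∑ s, c0 s))/2)) * ((g c' + g c0)/2)
        = (Real.exp (((∑ s, c' s) - (∑ s, c0 s))/2) * lemmaTwoF θ f x c'
          + Real.exp (((∑ s, c0 s) - (∑ s, c' s))/2) * lemmaTwoF θ f x c0)/2 := by
      rw [hFg, hFg, ← mul_assoc, ← mul_assoc, hEcoef1, hEcoef2]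
      ring
    have hexp2 : 2 ≤ Real.exp (((∑ s, c0 s) - (∑ s, c' s))/2)
        + Real.exp (((∑ s, c' s) - (∑ s, c0 s))/2) := by
      have hprod : Real.exp (((∑ s, c0 s) - (∑ s, c' s))/2)
          * Real.exp (((∑ s, c' s) - (∑ s, c0 s))/2) = 1 := by
        rw [← Real.exp_add]
        rw [show (((∑ s, c0 s) - (∑ s, c' s))/2 + ((∑ s, c' s) - (∑ s, c0 s))/2) = 0 by ring]
        exact Real.exp_zero
      nlinarith [Real.exp_pos (((∑ s, c0 s) - (∑ s, c' s))/2),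
        Real.exp_pos (((∑ s, c' s) - (∑ s, c0 s))/2),
        sq_nonneg (Real.exp (((∑ s, c0 s) - (∑ s, c' s))/2) - 1),
        sq_nonneg (Real.exp (((∑ s, c' s) - (∑ s, c0 s))/2) - 1)]
    have hF0pos : 0 < lemmaTwoF θ f x c0 := lt_of_lt_of_le hε0 (hc0max hc1K)
    have hlt : lemmaTwoF θ f x c0 < lemmaTwoF θ f x d := by
      have h1 : Real.exp (-(((∑ s, c' s) + (∑ s, c0 s))/2)) * ((g c' + g c0)/2)
          < lemmaTwoF θ f x d := by
        rw [hFd]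
        exact mul_lt_mul_of_pos_left hsum_lt (Real.exp_pos _)
      rw [h2, hFc'] at h1
      nlinarith [mul_le_mul_of_nonneg_left hexp2 hF0pos.le]
    have := hglobal d hdnn
    linarith
  exact ⟨c0, hc0nn, hGeq.symm, hzero c0 hc0nn hglobal, huniq⟩
end

section
/- For (f, x) ∈ ℓ∞(L) × c₀(L) define ν(f, x) = sup over all finitely supported functions d : L → [0,∞) of exp(−Σ_{t∈L} d_t) · Σ_{t∈L} (d_t|f_t| + θ(d_t)|x_t|). Then ν is an equivalent norm on ℓ∞(L) ⊕ c₀(L); specifically, e⁻¹·max{‖f‖∞, ½‖x‖∞} ≤ ν(f, x) ≤ e⁻¹·(‖f‖∞ + ‖x‖∞) for all (f, x), and ν(g, y) ≤ ν(f, x) whenever |g_t| ≤ |f_t| and |y_t| ≤ |x_t| for every t ∈ L. -/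
open scoped ENNReal

/-- `ν(f, x)`: the supremum, over finitely supported `d : L → [0,∞)`, of
`exp(−Σ_t d_t) · Σ_t (d_t|f_t| + θ(d_t)|x_t|)`, for
`f ∈ ℓ∞(L)` and `x ∈ c₀(L)`. -/
noncomputable def nuNorm (L : Type*) [TopologicalSpace L] [DiscreteTopology L]
    (θ : ℝ → ℝ) (f : lp (fun _ : L => ℝ) ⊤) (x : ZeroAtInftyContinuousMap L ℝ) : ℝ :=
  ⨆ d : {d : L →₀ ℝ // ∀ t, 0 ≤ d t},
    Real.exp (-(d.1.sum fun _ v => v)) *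
      (d.1.sum fun t v => v * |f t| + θ v * |x t|)

section helpers
open MeasureTheory Set


lemma aux_integrable (w : ℝ → ℝ) (hw_smooth : ContDiffOn ℝ (⊤ : ℕ∞) w (Set.Ioi 0))
    (hw_maps : ∀ v > (0:ℝ), w v ∈ Set.Ioo 1 2) (c : ℝ) (hc : 0 ≤ c) :
    IntegrableOn (fun v => (w v)⁻¹) (Ioc 0 c) := by
  have hcont : ContinuousOn (fun v => (w v)⁻¹) (Ioc 0 c) := by
    apply ContinuousOn.inv₀
    · exact (hw_smooth.continuousOn).mono (fun v hv => hv.1)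
    · intro v hv
      have := hw_maps v hv.1
      linarith [this.1]
  refine ⟨hcont.aestronglyMeasurable measurableSet_Ioc, ?_⟩
  apply HasFiniteIntegral.restrict_of_bounded (C := 1) measure_Ioc_lt_top
  rw [ae_restrict_iff' measurableSet_Ioc]
  refine Filter.Eventually.of_forall fun v hv => ?_
  have := hw_maps v hv.1
  rw [Real.norm_eq_abs, abs_of_nonneg (inv_nonneg.2 (by linarith [this.1]))]
  · rw [inv_le_one_iff₀]; right; linarith [this.1]

lemma aux_theta (w θ : ℝ → ℝ) (hw_smooth : ContDiffOn ℝ (⊤ : ℕ∞) w (Set.Ioi 0))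
    (hw_maps : ∀ v > (0:ℝ), w v ∈ Set.Ioo 1 2)
    (hθ_def : ∀ c : ℝ, θ c = ∫ v in (0:ℝ)..c, (w v)⁻¹) :
    θ 0 = 0 ∧ ∀ c, 0 ≤ c → c / 2 ≤ θ c ∧ θ c ≤ c := by
  constructor
  · rw [hθ_def]; simp
  intro c hc
  have hInt := aux_integrable w hw_smooth hw_maps c hc
  rw [hθ_def, intervalIntegral.integral_of_le hc]
  constructor
  · have h1 : ∫ v in Ioc 0 c, (2:ℝ)⁻¹ ≤ ∫ v in Ioc 0 c, (w v)⁻¹ := by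
      apply setIntegral_mono_on (integrableOn_const measure_Ioc_lt_top.ne) hInt measurableSet_Ioc
      intro v hv
      have := hw_maps v hv.1
      exact (inv_le_inv₀ (by norm_num) (by linarith [this.1])).2 this.2.le
    simpa [Real.volume_Ioc, ENNReal.toReal_ofReal hc, div_eq_inv_mul, mul_comm, max_eq_left hc] using h1
  · have h1 : ∫ v in Ioc 0 c, (w v)⁻¹ ≤ ∫ v in Ioc 0 c, (1:ℝ) := by
      apply setIntegral_mono_on hInt (integrableOn_const measure_Ioc_lt_top.ne) measurableSet_Ioc
      intro v hv
      have := hw_maps v hv.1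
      rw [inv_le_one_iff₀]; right; linarith [this.1]
    simpa [Real.volume_Ioc, ENNReal.toReal_ofReal hc, max_eq_left hc] using h1

section aux
variable {L : Type*} [TopologicalSpace L] [DiscreteTopology L]
variable {θ : ℝ → ℝ}

lemma aux_sexp {s : ℝ} (hs : 0 ≤ s) : s * Real.exp (-s) ≤ Real.exp (-1) := by
  have h1 : s ≤ Real.exp (s - 1) := by linarith [Real.add_one_le_exp (s - 1)]
  calc s * Real.exp (-s) ≤ Real.exp (s - 1) * Real.exp (-s) :=
        mul_le_mul_of_nonneg_right h1 (Real.exp_nonneg _)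
    _ = Real.exp (-1) := by rw [← Real.exp_add]; ring_nf

/-- the term of the supremum -/
noncomputable def nuTerm (θ : ℝ → ℝ) (f : lp (fun _ : L => ℝ) ⊤)
    (x : ZeroAtInftyContinuousMap L ℝ) (d : {d : L →₀ ℝ // ∀ t, 0 ≤ d t}) : ℝ :=
  Real.exp (-(d.1.sum fun _ v => v)) * (d.1.sum fun t v => v * |f t| + θ v * |x t|)

lemma nuNorm_eq (f : lp (fun _ : L => ℝ) ⊤) (x : ZeroAtInftyContinuousMap L ℝ) :
    nuNorm L θ f x = ⨆ d, nuTerm θ f x d := rfl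

lemma sum_nonneg' (d : {d : L →₀ ℝ // ∀ t, 0 ≤ d t}) : 0 ≤ d.1.sum fun _ v => v :=
  Finset.sum_nonneg fun t _ => d.2 t

lemma norm_apply_x (x : ZeroAtInftyContinuousMap L ℝ) (t : L) : |x t| ≤ ‖x‖ := by
  rw [← ZeroAtInftyContinuousMap.norm_toBCF_eq_norm]
  exact (x.toBCF.norm_coe_le_norm t)

lemma norm_apply_f (f : lp (fun _ : L => ℝ) ⊤) (t : L) : |f t| ≤ ‖f‖ :=
  lp.norm_apply_le_norm ENNReal.top_ne_zero f t

lemma nuTerm_le (hθ1 : ∀ c, 0 ≤ c → θ c ≤ c) (hθ2 : ∀ c, 0 ≤ c → 0 ≤ θ c)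
    (f : lp (fun _ : L => ℝ) ⊤) (x : ZeroAtInftyContinuousMap L ℝ)
    (d : {d : L →₀ ℝ // ∀ t, 0 ≤ d t}) :
    nuTerm θ f x d ≤ Real.exp (-1) * (‖f‖ + ‖x‖) := by
  set S := d.1.sum fun _ v => v with hS
  have hS0 : 0 ≤ S := sum_nonneg' d
  have hinner : (d.1.sum fun t v => v * |f t| + θ v * |x t|) ≤ S * (‖f‖ + ‖x‖) := by
    have : (d.1.sum fun t v => v * |f t| + θ v * |x t|)
        ≤ d.1.sum fun _ v => v * (‖f‖ + ‖x‖) := by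
      apply Finsupp.sum_le_sum
      intro t _
      have h1 := norm_apply_f f t
      have h2 := norm_apply_x x t
      have h3 := hθ1 (d.1 t) (d.2 t)
      have h4 := hθ2 (d.1 t) (d.2 t)
      have h5 := d.2 t
      have h6 : (0:ℝ) ≤ |x t| := abs_nonneg _
      have h7 : (0:ℝ) ≤ |f t| := abs_nonneg _
      nlinarith
    rw [← Finsupp.sum_mul] at this
    exact this
  calc nuTerm θ f x d ≤ Real.exp (-S) * (S * (‖f‖ + ‖x‖)) :=
        mul_le_mul_of_nonneg_left hinner (Real.exp_nonneg _)
    _ = (S * Real.exp (-S)) * (‖f‖ + ‖x‖) := by ring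
    _ ≤ Real.exp (-1) * (‖f‖ + ‖x‖) := by
        apply mul_le_mul_of_nonneg_right (aux_sexp hS0)
        positivity

lemma nuBdd (hθ1 : ∀ c, 0 ≤ c → θ c ≤ c) (hθ2 : ∀ c, 0 ≤ c → 0 ≤ θ c)
    (f : lp (fun _ : L => ℝ) ⊤) (x : ZeroAtInftyContinuousMap L ℝ) :
    BddAbove (Set.range (nuTerm θ f x)) :=
  ⟨Real.exp (-1) * (‖f‖ + ‖x‖), by rintro _ ⟨d, rfl⟩; exact nuTerm_le hθ1 hθ2 f x d⟩

lemma nuTerm_zero (hθ0 : θ 0 = 0) (f : lp (fun _ : L => ℝ) ⊤)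
    (x : ZeroAtInftyContinuousMap L ℝ) :
    nuTerm θ f x ⟨0, fun t => le_refl 0⟩ = 0 := by
  simp [nuTerm, Finsupp.sum_zero_index]

lemma nuNorm_nonneg (hθ0 : θ 0 = 0) (hθ1 : ∀ c, 0 ≤ c → θ c ≤ c)
    (hθ2 : ∀ c, 0 ≤ c → 0 ≤ θ c)
    (f : lp (fun _ : L => ℝ) ⊤) (x : ZeroAtInftyContinuousMap L ℝ) :
    0 ≤ nuNorm L θ f x := by
  rw [nuNorm_eq]
  have := le_ciSup (nuBdd hθ1 hθ2 f x) ⟨0, fun t => le_refl 0⟩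
  rwa [nuTerm_zero (θ := θ) hθ0 f x] at this

end aux

section main
variable {L : Type*} [TopologicalSpace L] [DiscreteTopology L]
variable {θ : ℝ → ℝ}

instance : Nonempty {d : L →₀ ℝ // ∀ t, 0 ≤ d t} := ⟨⟨0, fun t => le_refl 0⟩⟩

lemma nu_add (hθ0 : θ 0 = 0) (hθ1 : ∀ c, 0 ≤ c → θ c ≤ c) (hθ2 : ∀ c, 0 ≤ c → 0 ≤ θ c)
    (f g : lp (fun _ : L => ℝ) ⊤) (x y : ZeroAtInftyContinuousMap L ℝ) :
    nuNorm L θ (f + g) (x + y) ≤ nuNorm L θ f x + nuNorm L θ g y := by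
  rw [nuNorm_eq]
  apply ciSup_le
  intro d
  have key : nuTerm θ (f + g) (x + y) d ≤ nuTerm θ f x d + nuTerm θ g y d := by
    unfold nuTerm
    rw [← mul_add, ← Finsupp.sum_add]
    apply mul_le_mul_of_nonneg_left _ (Real.exp_nonneg _)
    apply Finsupp.sum_le_sum
    intro t _
    have hf : |(f + g) t| ≤ |f t| + |g t| := by
      rw [lp.coeFn_add]; exact abs_add_le _ _
    have hx : |(x + y) t| ≤ |x t| + |y t| := by
      simp only [ZeroAtInftyContinuousMap.coe_add, Pi.add_apply]
      exact abs_add_le _ _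
    have h4 := hθ2 (d.1 t) (d.2 t)
    have h5 := d.2 t
    nlinarith
  calc nuTerm θ (f + g) (x + y) d ≤ nuTerm θ f x d + nuTerm θ g y d := key
    _ ≤ nuNorm L θ f x + nuNorm L θ g y :=
      add_le_add (le_ciSup (nuBdd hθ1 hθ2 f x) d) (le_ciSup (nuBdd hθ1 hθ2 g y) d)

lemma nu_smul (a : ℝ) (f : lp (fun _ : L => ℝ) ⊤) (x : ZeroAtInftyContinuousMap L ℝ) :
    nuNorm L θ (a • f) (a • x) = |a| * nuNorm L θ f x := by
  rw [nuNorm_eq, nuNorm_eq, Real.mul_iSup_of_nonneg (abs_nonneg a)]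
  congr 1
  funext d
  unfold nuTerm
  have h1 : (d.1.sum fun t v => v * |(a • f) t| + θ v * |(a • x) t|)
      = |a| * d.1.sum fun t v => v * |f t| + θ v * |x t| := by
    rw [Finsupp.mul_sum]
    apply Finsupp.sum_congr
    intro t _
    have hf : |(a • f) t| = |a| * |f t| := by
      rw [lp.coeFn_smul]; simp [abs_mul]
    have hx : |(a • x) t| = |a| * |x t| := by
      simp only [ZeroAtInftyContinuousMap.coe_smul, Pi.smul_apply, smul_eq_mul]
      exact abs_mul a (x t)
    rw [hf, hx]; ring
  rw [h1]; ring

lemma nu_mono (hθ1 : ∀ c, 0 ≤ c → θ c ≤ c) (hθ2 : ∀ c, 0 ≤ c → 0 ≤ θ c)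
    (f g : lp (fun _ : L => ℝ) ⊤) (x y : ZeroAtInftyContinuousMap L ℝ)
    (hfg : ∀ t, |g t| ≤ |f t|) (hxy : ∀ t, |y t| ≤ |x t|) :
    nuNorm L θ g y ≤ nuNorm L θ f x := by
  rw [nuNorm_eq, nuNorm_eq]
  apply ciSup_le
  intro d
  refine le_trans ?_ (le_ciSup (nuBdd hθ1 hθ2 f x) d)
  unfold nuTerm
  apply mul_le_mul_of_nonneg_left _ (Real.exp_nonneg _)
  apply Finsupp.sum_le_sum
  intro t _
  have h4 := hθ2 (d.1 t) (d.2 t)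
  have h5 := d.2 t
  have := hfg t
  have := hxy t
  nlinarith

lemma nu_upper (hθ1 : ∀ c, 0 ≤ c → θ c ≤ c) (hθ2 : ∀ c, 0 ≤ c → 0 ≤ θ c)
    (f : lp (fun _ : L => ℝ) ⊤) (x : ZeroAtInftyContinuousMap L ℝ) :
    nuNorm L θ f x ≤ (Real.exp 1)⁻¹ * (‖f‖ + ‖x‖) := by
  rw [nuNorm_eq, ← Real.exp_neg]
  exact ciSup_le (nuTerm_le hθ1 hθ2 f x)

lemma nu_single (hθ0 : θ 0 = 0) (hθ1 : ∀ c, 0 ≤ c → θ c ≤ c)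
    (hθ2 : ∀ c, 0 ≤ c → 0 ≤ θ c)
    (f : lp (fun _ : L => ℝ) ⊤) (x : ZeroAtInftyContinuousMap L ℝ) (t : L) :
    Real.exp (-1) * (|f t| + θ 1 * |x t|) ≤ nuNorm L θ f x := by
  classical
  have hd : ∀ s, 0 ≤ (Finsupp.single t (1:ℝ)) s := by
    intro s
    rw [Finsupp.single_apply]
    split <;> norm_num
  set d : {d : L →₀ ℝ // ∀ s, 0 ≤ d s} := ⟨Finsupp.single t 1, hd⟩ with hdd
  have h1 : (d.1.sum fun _ v => v) = 1 := by
    rw [hdd]; exact Finsupp.sum_single_index rfl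
  have h2 : (d.1.sum fun s v => v * |f s| + θ v * |x s|) = 1 * |f t| + θ 1 * |x t| := by
    rw [hdd]
    exact Finsupp.sum_single_index (by simp [hθ0])
  have := le_ciSup (nuBdd hθ1 hθ2 f x) d
  rw [nuNorm_eq]
  refine le_trans (le_of_eq ?_) this
  unfold nuTerm
  rw [h1, h2, one_mul]

lemma nu_lower (hθ0 : θ 0 = 0) (hθ1 : ∀ c, 0 ≤ c → θ c ≤ c)
    (hθ2 : ∀ c, 0 ≤ c → 0 ≤ θ c) (hθh : (1:ℝ)/2 ≤ θ 1)
    (f : lp (fun _ : L => ℝ) ⊤) (x : ZeroAtInftyContinuousMap L ℝ) :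
    (Real.exp 1)⁻¹ * max ‖f‖ (2⁻¹ * ‖x‖) ≤ nuNorm L θ f x := by
  have hν := nuNorm_nonneg hθ0 hθ1 hθ2 f x
  have hee : Real.exp (-1) * Real.exp 1 = 1 := by
    rw [← Real.exp_add]; norm_num
  have key : ∀ t, |f t| + θ 1 * |x t| ≤ Real.exp 1 * nuNorm L θ f x := by
    intro t
    have h := nu_single hθ0 hθ1 hθ2 f x t
    have h2 := mul_le_mul_of_nonneg_left h (Real.exp_nonneg 1)
    calc |f t| + θ 1 * |x t|
        = Real.exp 1 * (Real.exp (-1) * (|f t| + θ 1 * |x t|)) := by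
          rw [← mul_assoc, mul_comm (Real.exp 1) (Real.exp (-1)), hee, one_mul]
      _ ≤ Real.exp 1 * nuNorm L θ f x := h2
  have hf : ‖f‖ ≤ Real.exp 1 * nuNorm L θ f x := by
    apply lp.norm_le_of_forall_le (by positivity)
    intro t
    have h := key t
    have hθ1' := hθ2 1 (by norm_num)
    have hxt : (0:ℝ) ≤ |x t| := abs_nonneg _
    rw [Real.norm_eq_abs]
    nlinarith
  have hx : ‖x‖ ≤ 2 * (Real.exp 1 * nuNorm L θ f x) := by
    rw [← ZeroAtInftyContinuousMap.norm_toBCF_eq_norm]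
    rw [BoundedContinuousFunction.norm_le (by positivity)]
    intro t
    have h := key t
    have hft : (0:ℝ) ≤ |f t| := abs_nonneg _
    have hxt : (0:ℝ) ≤ |x t| := abs_nonneg _
    have hco : (x.toBCF t : ℝ) = x t := rfl
    rw [Real.norm_eq_abs, hco]
    nlinarith
  have hmax : max ‖f‖ (2⁻¹ * ‖x‖) ≤ Real.exp 1 * nuNorm L θ f x := by
    apply max_le hf
    linarith
  calc (Real.exp 1)⁻¹ * max ‖f‖ (2⁻¹ * ‖x‖)
      ≤ (Real.exp 1)⁻¹ * (Real.exp 1 * nuNorm L θ f x) := by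
        apply mul_le_mul_of_nonneg_left hmax (by positivity)
    _ = nuNorm L θ f x := by
        rw [← mul_assoc, inv_mul_cancel₀ (Real.exp_ne_zero 1), one_mul]

end main

end helpers

/-- `ν` is an equivalent lattice norm on `ℓ∞(L) ⊕ c₀(L)`:
it is subadditive and absolutely homogeneous, satisfies
`e⁻¹·max{‖f‖∞, ½‖x‖∞} ≤ ν(f,x) ≤ e⁻¹·(‖f‖∞ + ‖x‖∞)`, and is monotone for
coordinatewise domination of absolute values. -/
theorem nuNorm_is_equivalent_lattice_norm
    (ϖ w : ℝ → ℝ)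
    (hϖ_smooth : ContDiffOn ℝ (⊤ : ℕ∞) ϖ (Set.Ico 0 2))
    (hϖ_zero : ∀ u ∈ Set.Icc (0:ℝ) 1, ϖ u = 0)
    (hϖ_mono : StrictMonoOn ϖ (Set.Ico 1 2))
    (hϖ_nonneg : ∀ u ∈ Set.Ico (0:ℝ) 2, 0 ≤ ϖ u)
    (hϖ_tendsto : Filter.Tendsto ϖ (nhdsWithin 2 (Set.Iio 2)) Filter.atTop)
    (hw_smooth : ContDiffOn ℝ (⊤ : ℕ∞) w (Set.Ioi 0))
    (hw_mono : StrictMonoOn w (Set.Ioi 0))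
    (hw_maps : ∀ v > (0:ℝ), w v ∈ Set.Ioo 1 2)
    (hw_onto : ∀ u ∈ Set.Ioo (1:ℝ) 2, ∃ v > (0:ℝ), w v = u)
    (hw_left : ∀ v > (0:ℝ), ϖ (w v) = v)
    (hw_right : ∀ u ∈ Set.Ioo (1:ℝ) 2, w (ϖ u) = u)
    (θ : ℝ → ℝ)
    (hθ_def : ∀ c : ℝ, θ c = ∫ v in (0:ℝ)..c, (w v)⁻¹)
    (L : Type*) [TopologicalSpace L] [DiscreteTopology L] :
    (∀ f g : lp (fun _ : L => ℝ) ⊤, ∀ x y : ZeroAtInftyContinuousMap L ℝ,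
        nuNorm L θ (f + g) (x + y) ≤ nuNorm L θ f x + nuNorm L θ g y) ∧
    (∀ a : ℝ, ∀ f : lp (fun _ : L => ℝ) ⊤, ∀ x : ZeroAtInftyContinuousMap L ℝ,
        nuNorm L θ (a • f) (a • x) = |a| * nuNorm L θ f x) ∧
    (∀ f : lp (fun _ : L => ℝ) ⊤, ∀ x : ZeroAtInftyContinuousMap L ℝ,
        (Real.exp 1)⁻¹ * max ‖f‖ (2⁻¹ * ‖x‖) ≤ nuNorm L θ f x ∧
        nuNorm L θ f x ≤ (Real.exp 1)⁻¹ * (‖f‖ + ‖x‖)) ∧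
    (∀ f g : lp (fun _ : L => ℝ) ⊤, ∀ x y : ZeroAtInftyContinuousMap L ℝ,
        (∀ t, |g t| ≤ |f t|) → (∀ t, |y t| ≤ |x t|) →
        nuNorm L θ g y ≤ nuNorm L θ f x) := by
  obtain ⟨hθ0, hθb⟩ := aux_theta w θ hw_smooth hw_maps hθ_def
  have hθ1 : ∀ c, 0 ≤ c → θ c ≤ c := fun c hc => (hθb c hc).2
  have hθlb : ∀ c, 0 ≤ c → c / 2 ≤ θ c := fun c hc => (hθb c hc).1
  have hθ2 : ∀ c, 0 ≤ c → 0 ≤ θ c := fun c hc => le_trans (by linarith) (hθlb c hc)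
  have hθh : (1:ℝ)/2 ≤ θ 1 := by have := hθlb 1 (by norm_num); linarith
  exact ⟨fun f g x y => nu_add hθ0 hθ1 hθ2 f g x y,
    fun a f x => nu_smul a f x,
    fun f x => ⟨nu_lower hθ0 hθ1 hθ2 hθh f x, nu_upper hθ1 hθ2 f x⟩,
    fun f g x y h1 h2 => nu_mono hθ1 hθ2 f g x y h1 h2⟩
end

section
/- For (f, x) ∈ ℓ∞(L) × c₀(L) define ν(f, x) = sup over all finitely supported functions d : L → [0,∞) of exp(−Σ_{t∈L} d_t) · Σ_{t∈L} (d_t|f_t| + θ(d_t)|x_t|), and let M(f, x) = {t ∈ L : |f_t| + |x_t| ≥ ‖|f| + ½|x|‖∞}. If (f, x) ∈ U(L), then ν(f, x) equals the supremum of the same expression taken only over finitely supported d : L → [0,∞) with d_t = 0 for all t ∉ M(f, x). -/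
open scoped ENNReal

open MeasureTheory intervalIntegral Set in
private lemma theta_bounds_aux (w θ : ℝ → ℝ)
    (hw_smooth : ContDiffOn ℝ (⊤ : ℕ∞) w (Set.Ioi 0))
    (hw_maps : ∀ v > (0:ℝ), w v ∈ Set.Ioo 1 2)
    (hθ_def : ∀ c : ℝ, θ c = ∫ v in (0:ℝ)..c, (w v)⁻¹)
    {u v : ℝ} (hu : 0 ≤ u) (huv : u ≤ v) :
    2⁻¹ * (v - u) ≤ θ v - θ u ∧ θ v - θ u ≤ v - u := by
  have hInt : ∀ a b : ℝ, 0 ≤ a → a ≤ b →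
      IntervalIntegrable (fun s => (w s)⁻¹) volume a b := by
    intro a b ha hab
    rw [intervalIntegrable_iff_integrableOn_Ioc_of_le hab]
    constructor
    · refine ContinuousOn.aestronglyMeasurable ?_ measurableSet_Ioc
      refine ContinuousOn.inv₀ (hw_smooth.continuousOn.mono fun s hs => ?_) fun s hs => ?_
      · exact lt_of_le_of_lt ha hs.1
      · exact ne_of_gt (lt_trans one_pos (hw_maps s (lt_of_le_of_lt ha hs.1)).1)
    · refine HasFiniteIntegral.restrict_of_bounded (C := 1) measure_Ioc_lt_top ?_
      rw [ae_restrict_iff' measurableSet_Ioc]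
      refine ae_of_all _ fun s hs => ?_
      have h1 : 1 < w s := (hw_maps s (lt_of_le_of_lt ha hs.1)).1
      rw [Real.norm_eq_abs, abs_of_nonneg (inv_nonneg.mpr (by linarith))]
      exact inv_le_one_of_one_le₀ h1.le
  have h0v : (0:ℝ) ≤ v := hu.trans huv
  have hsub : θ v - θ u = ∫ s in u..v, (w s)⁻¹ := by
    rw [hθ_def v, hθ_def u]
    exact integral_interval_sub_left (hInt 0 v le_rfl h0v) (hInt 0 u le_rfl hu)
  have hae : ∀ᵐ s ∂(volume.restrict (Set.Icc u v)), s ∈ Set.Ioc u v := by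
    rw [ae_restrict_iff' measurableSet_Icc]
    have h0 : ∀ᵐ s : ℝ, s ≠ u := by
      rw [ae_iff]
      have : {s : ℝ | ¬ s ≠ u} = {u} := by ext s; simp
      rw [this]
      exact Real.volume_singleton
    filter_upwards [h0] with s hs hmem
    exact ⟨lt_of_le_of_ne hmem.1 (Ne.symm hs), hmem.2⟩
  have hle1 : (fun _ : ℝ => (2:ℝ)⁻¹) ≤ᵐ[volume.restrict (Set.Icc u v)]
      fun s => (w s)⁻¹ := by
    filter_upwards [hae] with s hs
    have h2 := hw_maps s (lt_of_le_of_lt hu hs.1)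
    exact (inv_anti₀ (by linarith [h2.1]) h2.2.le)
  have hle2 : (fun s => (w s)⁻¹) ≤ᵐ[volume.restrict (Set.Icc u v)]
      fun _ : ℝ => (1:ℝ) := by
    filter_upwards [hae] with s hs
    have h2 := hw_maps s (lt_of_le_of_lt hu hs.1)
    exact inv_le_one_of_one_le₀ h2.1.le
  constructor
  · have hmono := integral_mono_ae_restrict (μ := volume) huv
      (intervalIntegrable_const (c := (2:ℝ)⁻¹)) (hInt u v hu huv) hle1
    rw [hsub]
    calc 2⁻¹ * (v - u) = ∫ _ in u..v, (2:ℝ)⁻¹ := by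
          rw [intervalIntegral.integral_const, smul_eq_mul]; ring
      _ ≤ _ := hmono
  · have hmono := integral_mono_ae_restrict (μ := volume) huv (hInt u v hu huv)
      (intervalIntegrable_const (c := (1:ℝ))) hle2
    rw [hsub]
    calc (∫ s in u..v, (w s)⁻¹) ≤ ∫ _ in u..v, (1:ℝ) := hmono
      _ = v - u := by rw [intervalIntegral.integral_const, smul_eq_mul]; ring

/-- if `(f, x) ∈ U(L)` (that is, `‖f‖∞` and `‖x‖∞` are both
strictly smaller than `‖|f| + ½|x|‖∞`), then `ν(f, x)` equals the supremum of
the same expression taken only over finitely supported `d : L → [0,∞)` that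
vanish outside `M(f, x) = {t : |f_t| + |x_t| ≥ ‖|f| + ½|x|‖∞}`. -/
theorem nuNorm_sup_over_M
    (ϖ w : ℝ → ℝ)
    (hϖ_smooth : ContDiffOn ℝ (⊤ : ℕ∞) ϖ (Set.Ico 0 2))
    (hϖ_zero : ∀ u ∈ Set.Icc (0:ℝ) 1, ϖ u = 0)
    (hϖ_mono : StrictMonoOn ϖ (Set.Ico 1 2))
    (hϖ_nonneg : ∀ u ∈ Set.Ico (0:ℝ) 2, 0 ≤ ϖ u)
    (hϖ_tendsto : Filter.Tendsto ϖ (nhdsWithin 2 (Set.Iio 2)) Filter.atTop)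
    (hw_smooth : ContDiffOn ℝ (⊤ : ℕ∞) w (Set.Ioi 0))
    (hw_mono : StrictMonoOn w (Set.Ioi 0))
    (hw_maps : ∀ v > (0:ℝ), w v ∈ Set.Ioo 1 2)
    (hw_onto : ∀ u ∈ Set.Ioo (1:ℝ) 2, ∃ v > (0:ℝ), w v = u)
    (hw_left : ∀ v > (0:ℝ), ϖ (w v) = v)
    (hw_right : ∀ u ∈ Set.Ioo (1:ℝ) 2, w (ϖ u) = u)
    (θ : ℝ → ℝ)
    (hθ_def : ∀ c : ℝ, θ c = ∫ v in (0:ℝ)..c, (w v)⁻¹)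
    (L : Type*) [TopologicalSpace L] [DiscreteTopology L]
    (f : lp (fun _ : L => ℝ) ⊤) (x : ZeroAtInftyContinuousMap L ℝ)
    (hU1 : ‖f‖ < ⨆ t, (|f t| + 2⁻¹ * |x t|))
    (hU2 : ‖x‖ < ⨆ t, (|f t| + 2⁻¹ * |x t|)) :
    nuNorm L θ f x =
      ⨆ d : {d : L →₀ ℝ // (∀ t, 0 ≤ d t) ∧
          ∀ t, |f t| + |x t| < (⨆ s, (|f s| + 2⁻¹ * |x s|)) → d t = 0},
        Real.exp (-(d.1.sum fun _ v => v)) *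
          (d.1.sum fun t v => v * |f t| + θ v * |x t|) := by
  classical
  set N := ⨆ s : L, (|f s| + 2⁻¹ * |x s|) with hN
  -- θ facts
  have hθ0 : θ 0 = 0 := by rw [hθ_def]; simp
  have hθlb : ∀ a b : ℝ, 0 ≤ a → a ≤ b → 2⁻¹ * (b - a) ≤ θ b - θ a := fun a b ha hab =>
    (theta_bounds_aux w θ hw_smooth hw_maps hθ_def ha hab).1
  have hθub : ∀ a b : ℝ, 0 ≤ a → a ≤ b → θ b - θ a ≤ b - a := fun a b ha hab =>
    (theta_bounds_aux w θ hw_smooth hw_maps hθ_def ha hab).2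
  have hθle : ∀ v : ℝ, 0 ≤ v → θ v ≤ v := by
    intro v hv; have := hθub 0 v le_rfl hv; rw [hθ0] at this; linarith
  -- coordinatewise bounds
  have hfb : ∀ t, |f t| ≤ ‖f‖ := fun t => by
    have h := lp.norm_apply_le_norm ENNReal.top_ne_zero f t
    rwa [Real.norm_eq_abs] at h
  have hxb : ∀ t, |x t| ≤ ‖x‖ := fun t => by
    have h1 := x.toBCF.norm_coe_le_norm t
    rw [ZeroAtInftyContinuousMap.norm_toBCF_eq_norm, Real.norm_eq_abs] at h1
    exact h1
  have hL : Nonempty L := by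
    by_contra hL
    rw [not_nonempty_iff] at hL
    have h0 : N = 0 := by rw [hN]; exact Real.iSup_of_isEmpty _
    rw [h0] at hU1
    exact absurd hU1 (not_lt.mpr (norm_nonneg f))
  haveI := hL
  -- boundedness of the value functional
  have hval_le : ∀ d : L →₀ ℝ, (∀ t, 0 ≤ d t) →
      Real.exp (-(d.sum fun _ v => v)) * (d.sum fun t v => v * |f t| + θ v * |x t|) ≤
        ‖f‖ + ‖x‖ := by
    intro d hd
    set S := d.sum fun _ v => v with hS
    have hS0 : 0 ≤ S := Finset.sum_nonneg fun t _ => hd t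
    have hG : (d.sum fun t v => v * |f t| + θ v * |x t|) ≤ S * (‖f‖ + ‖x‖) := by
      rw [hS, Finsupp.sum, Finsupp.sum, Finset.sum_mul]
      refine Finset.sum_le_sum fun t _ => ?_
      have h1 : θ (d t) * |x t| ≤ d t * |x t| :=
        mul_le_mul_of_nonneg_right (hθle _ (hd t)) (abs_nonneg _)
      have h2 : d t * |f t| ≤ d t * ‖f‖ := mul_le_mul_of_nonneg_left (hfb t) (hd t)
      have h3 : d t * |x t| ≤ d t * ‖x‖ := mul_le_mul_of_nonneg_left (hxb t) (hd t)
      nlinarith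
    have hexp : Real.exp (-S) * S ≤ 1 := by
      rw [Real.exp_neg, inv_mul_le_iff₀ (Real.exp_pos S), mul_one]
      linarith [Real.add_one_le_exp S]
    have hC : (0:ℝ) ≤ ‖f‖ + ‖x‖ := by positivity
    calc Real.exp (-S) * (d.sum fun t v => v * |f t| + θ v * |x t|)
        ≤ Real.exp (-S) * (S * (‖f‖ + ‖x‖)) :=
          mul_le_mul_of_nonneg_left hG (Real.exp_nonneg _)
      _ = Real.exp (-S) * S * (‖f‖ + ‖x‖) := by ring
      _ ≤ 1 * (‖f‖ + ‖x‖) := mul_le_mul_of_nonneg_right hexp hC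
      _ = ‖f‖ + ‖x‖ := one_mul _
  have hbdd1 : BddAbove (Set.range fun d : {d : L →₀ ℝ // ∀ t, 0 ≤ d t} =>
      Real.exp (-(d.1.sum fun _ v => v)) * (d.1.sum fun t v => v * |f t| + θ v * |x t|)) := by
    refine ⟨‖f‖ + ‖x‖, ?_⟩
    rintro _ ⟨d, rfl⟩
    exact hval_le d.1 d.2
  have hbdd2 : BddAbove (Set.range fun d : {d : L →₀ ℝ // (∀ t, 0 ≤ d t) ∧
      ∀ t, |f t| + |x t| < N → d t = 0} =>
      Real.exp (-(d.1.sum fun _ v => v)) * (d.1.sum fun t v => v * |f t| + θ v * |x t|)) := by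
    refine ⟨‖f‖ + ‖x‖, ?_⟩
    rintro _ ⟨d, rfl⟩
    exact hval_le d.1 d.2.1
  -- existence of a point attaining the sup N
  have ht0 : ∃ t₀ : L, N ≤ |f t₀| + 2⁻¹ * |x t₀| := by
    by_contra hcon
    push_neg at hcon
    set ε := N - ‖f‖ with hε
    have hεpos : 0 < ε := by rw [hε]; linarith
    have hfin : ((⇑x ⁻¹' Metric.ball 0 ε)ᶜ : Set L).Finite := by
      have hx : Filter.Tendsto ⇑x (Filter.cocompact L) (nhds 0) := zero_at_infty x
      rw [Filter.cocompact_eq_cofinite] at hx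
      exact Filter.mem_cofinite.mp (hx (Metric.ball_mem_nhds (0:ℝ) hεpos))
    obtain ⟨t₁⟩ := id hL
    set K : Finset L := insert t₁ hfin.toFinset with hK
    obtain ⟨b, hbK, hb⟩ := K.exists_max_image (fun t => |f t| + 2⁻¹ * |x t|)
      ⟨t₁, Finset.mem_insert_self _ _⟩
    have hboundall : ∀ t : L, |f t| + 2⁻¹ * |x t| ≤
        max (|f b| + 2⁻¹ * |x b|) (‖f‖ + 2⁻¹ * ε) := by
      intro t
      by_cases ht : t ∈ K
      · exact le_max_of_le_left (hb t ht)
      · have ht' : t ∉ hfin.toFinset := fun h => ht (Finset.mem_insert_of_mem h)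
        rw [Set.Finite.mem_toFinset, Set.notMem_compl_iff] at ht'
        have hxt : |x t| < ε := by
          have := ht'
          rw [Set.mem_preimage, Metric.mem_ball, Real.dist_eq, sub_zero] at this
          exact this
        refine le_max_of_le_right ?_
        have := hfb t
        linarith
    have hNle : N ≤ max (|f b| + 2⁻¹ * |x b|) (‖f‖ + 2⁻¹ * ε) :=
      ciSup_le hboundall
    have h1 : |f b| + 2⁻¹ * |x b| < N := hcon b
    have h2 : ‖f‖ + 2⁻¹ * ε < N := by rw [hε]; linarith
    exact absurd hNle (not_le.mpr (max_lt h1 h2))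
  obtain ⟨t₀, ht₀⟩ := ht0
  have ht₀M : ¬ (|f t₀| + |x t₀| < N) := by
    have := abs_nonneg (x t₀)
    push_neg
    linarith
  haveI hne2 : Nonempty {d : L →₀ ℝ // (∀ t, 0 ≤ d t) ∧
      ∀ t, |f t| + |x t| < N → d t = 0} :=
    ⟨⟨0, fun t => le_rfl, fun t _ => rfl⟩⟩
  haveI hne1 : Nonempty {d : L →₀ ℝ // ∀ t, 0 ≤ d t} := ⟨⟨0, fun t => le_rfl⟩⟩
  rw [nuNorm]
  refine le_antisymm ?_ ?_
  · -- hard direction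
    refine ciSup_le fun dd => ?_
    obtain ⟨d, hd⟩ := dd
    set P : L → Prop := fun t => |f t| + |x t| < N with hP
    set U : Finset L := insert t₀ d.support with hU
    have ht₀U : t₀ ∈ U := Finset.mem_insert_self _ _
    set c : ℝ := ∑ t ∈ U.filter P, d t with hc
    have hc0 : 0 ≤ c := Finset.sum_nonneg fun t _ => hd t
    set e : L →₀ ℝ := Finsupp.filter (fun t => ¬ P t) d + Finsupp.single t₀ c with he
    have he_apply : ∀ t, e t = (if P t then 0 else d t) + (if t₀ = t then c else 0) := by
      intro t
      rw [he, Finsupp.add_apply, Finsupp.filter_apply, Finsupp.single_apply]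
      congr 1
      by_cases h : P t
      · rw [if_neg (not_not_intro h), if_pos h]
      · rw [if_pos h, if_neg h]
    have heP : ∀ t, P t → e t = 0 := by
      intro t ht
      rw [he_apply t, if_pos ht, if_neg, add_zero]
      rintro rfl
      exact ht₀M ht
    have heNP : ∀ t, ¬ P t → t ≠ t₀ → e t = d t := by
      intro t ht hne
      rw [he_apply t, if_neg ht, if_neg (fun h => hne h.symm), add_zero]
    have het₀ : e t₀ = d t₀ + c := by
      rw [he_apply t₀, if_neg ht₀M, if_pos rfl]
    have henn : ∀ t, 0 ≤ e t := by
      intro t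
      rw [he_apply t]
      split_ifs <;> [skip; skip; skip; skip] <;> linarith [hd t, hc0]
    have hesupp : e.support ⊆ U := by
      refine Finsupp.support_add.trans (Finset.union_subset ?_ ?_)
      · rw [Finsupp.support_filter]
        exact (Finset.filter_subset _ _).trans (Finset.subset_insert _ _)
      · exact Finsupp.support_single_subset.trans
          (Finset.singleton_subset_iff.mpr ht₀U)
    have hsum_d : ∀ (h : L → ℝ → ℝ), (∀ i, h i 0 = 0) →
        d.sum h = ∑ t ∈ U, h t (d t) := fun h h0 =>
      Finsupp.sum_of_support_subset d (Finset.subset_insert _ _) h fun i _ => h0 i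
    have hsum_e : ∀ (h : L → ℝ → ℝ), (∀ i, h i 0 = 0) →
        e.sum h = ∑ t ∈ U, h t (e t) := fun h h0 =>
      Finsupp.sum_of_support_subset e hesupp h fun i _ => h0 i
    -- total mass is preserved
    have hS : (e.sum fun _ v => v) = d.sum fun _ v => v := by
      rw [hsum_e _ fun _ => rfl, hsum_d _ fun _ => rfl]
      calc ∑ t ∈ U, e t
          = ∑ t ∈ U, ((if P t then 0 else d t) + (if t₀ = t then c else 0)) :=
            Finset.sum_congr rfl fun t _ => he_apply t
        _ = (∑ t ∈ U, if P t then 0 else d t) + ∑ t ∈ U, (if t₀ = t then c else 0) :=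
            Finset.sum_add_distrib
        _ = (∑ t ∈ U.filter (fun t => ¬ P t), d t) + c := by
            rw [Finset.sum_ite_eq U t₀ fun _ => c, if_pos ht₀U,
              Finset.sum_ite, Finset.sum_const_zero, zero_add]
        _ = ∑ t ∈ U, d t := by
            rw [hc, add_comm]
            exact Finset.sum_filter_add_sum_filter_not U P d
    -- the weighted sum does not decrease
    have hG : (∑ t ∈ U, (d t * |f t| + θ (d t) * |x t|)) ≤
        ∑ t ∈ U, (e t * |f t| + θ (e t) * |x t|) := by
      have ht₀B : t₀ ∈ U.filter (fun t => ¬ P t) :=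
        Finset.mem_filter.mpr ⟨ht₀U, ht₀M⟩
      have hsplit_d := Finset.sum_filter_add_sum_filter_not U P
        (fun t => d t * |f t| + θ (d t) * |x t|)
      have hsplit_e := Finset.sum_filter_add_sum_filter_not U P
        (fun t => e t * |f t| + θ (e t) * |x t|)
      have hA_e : ∑ t ∈ U.filter P, (e t * |f t| + θ (e t) * |x t|) = 0 := by
        refine Finset.sum_eq_zero fun t ht => ?_
        rw [heP t (Finset.mem_filter.mp ht).2, hθ0]
        ring
      have herase_d := Finset.add_sum_erase (U.filter (fun t => ¬ P t))
        (fun t => d t * |f t| + θ (d t) * |x t|) ht₀B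
      have herase_e := Finset.add_sum_erase (U.filter (fun t => ¬ P t))
        (fun t => e t * |f t| + θ (e t) * |x t|) ht₀B
      beta_reduce at herase_d herase_e
      have htail : ∑ t ∈ (U.filter (fun t => ¬ P t)).erase t₀,
          (e t * |f t| + θ (e t) * |x t|) =
          ∑ t ∈ (U.filter (fun t => ¬ P t)).erase t₀,
          (d t * |f t| + θ (d t) * |x t|) := by
        refine Finset.sum_congr rfl fun t ht => ?_
        have h1 := Finset.mem_erase.mp ht
        rw [heNP t (Finset.mem_filter.mp h1.2).2 h1.1]
      have hA_d : ∑ t ∈ U.filter P, (d t * |f t| + θ (d t) * |x t|) ≤ c * N := by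
        rw [hc, Finset.sum_mul]
        refine Finset.sum_le_sum fun t ht => ?_
        have hPt : |f t| + |x t| < N := (Finset.mem_filter.mp ht).2
        have h1 : θ (d t) * |x t| ≤ d t * |x t| :=
          mul_le_mul_of_nonneg_right (hθle _ (hd t)) (abs_nonneg _)
        have h2 : d t * (|f t| + |x t|) ≤ d t * N :=
          mul_le_mul_of_nonneg_left hPt.le (hd t)
        nlinarith
      have hkey : c * N + (d t₀ * |f t₀| + θ (d t₀) * |x t₀|) ≤
          e t₀ * |f t₀| + θ (e t₀) * |x t₀| := by
        rw [het₀]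
        have hθd := hθlb (d t₀) (d t₀ + c) (hd t₀) (by linarith)
        have h1 : c * N ≤ c * (|f t₀| + 2⁻¹ * |x t₀|) :=
          mul_le_mul_of_nonneg_left ht₀ hc0
        have h2 : (2⁻¹ * c) * |x t₀| ≤ (θ (d t₀ + c) - θ (d t₀)) * |x t₀| :=
          mul_le_mul_of_nonneg_right (by linarith) (abs_nonneg _)
        nlinarith
      linarith [hsplit_d, hsplit_e, hA_e, herase_d, herase_e, htail, hA_d, hkey]
    -- conclude
    refine le_ciSup_of_le hbdd2 ⟨e, henn, fun t ht => heP t ht⟩ ?_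
    show Real.exp (-(d.sum fun _ v => v)) * (d.sum fun t v => v * |f t| + θ v * |x t|) ≤
      Real.exp (-(e.sum fun _ v => v)) * (e.sum fun t v => v * |f t| + θ v * |x t|)
    rw [hS, hsum_d (fun t v => v * |f t| + θ v * |x t|) (fun i => by simp only []; rw [hθ0]; ring),
      hsum_e (fun t v => v * |f t| + θ v * |x t|) (fun i => by simp only []; rw [hθ0]; ring)]
    exact mul_le_mul_of_nonneg_left hG (Real.exp_nonneg _)
  · refine ciSup_le fun d => ?_
    exact le_ciSup_of_le hbdd1 ⟨d.1, d.2.1⟩ le_rfl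
end

section
/- Let Ω be a limit ordinal and let [0,Ω) denote the space of ordinals smaller than Ω with the order topology. Let f be a nonzero element of C₀([0,Ω)), the space of continuous real-valued functions on [0,Ω) vanishing at infinity, with supremum norm ‖·‖∞. Then the set {α < Ω : |f(α)| = ‖f‖∞} is nonempty and has a greatest element, and if α is this greatest element then f(α) − f(α+1) ≠ 0. -/
/-!
A nonzero `f ∈ C₀(X)` is small outside a compact set, so `‖f‖` is attained and the set where
`‖f x‖ = ‖f‖` is a nonempty compact set; in a linearly ordered space with closed upper rays it
therefore has a greatest element `α`. If `f α = f (α + 1)`, then `α + 1` would also attain the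
norm, contradicting maximality.
-/

open Filter ZeroAtInfty

namespace ZeroAtInftyContinuousMap

variable {X E : Type*} [TopologicalSpace X]

theorem norm_apply_le [SeminormedAddCommGroup E] (f : C₀(X, E)) (x : X) : ‖f x‖ ≤ ‖f‖ :=
  f.toBCF.norm_coe_le_norm x

theorem isCompact_setOf_le_norm_apply [SeminormedAddCommGroup E] (f : C₀(X, E)) {ε : ℝ}
    (hε : 0 < ε) : IsCompact {x | ε ≤ ‖f x‖} := by
  have hsmall : {x | ‖f x‖ < ε} ∈ cocompact X :=
    (zero_at_infty f).norm.eventually (gt_mem_nhds (by simpa using hε))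
  obtain ⟨K, hK, hKc⟩ := mem_cocompact.mp hsmall
  refine hK.of_isClosed_subset (isClosed_le continuous_const f.continuous.norm) fun x hx => ?_
  by_contra hxK
  exact (hKc hxK).not_ge (show ε ≤ ‖f x‖ from hx)

variable [NormedAddCommGroup E]

theorem exists_forall_norm_apply_le {f : C₀(X, E)} (hf : f ≠ 0) :
    ∃ x, ∀ y, ‖f y‖ ≤ ‖f x‖ := by
  obtain ⟨x₀, hx₀⟩ := DFunLike.ne_iff.mp hf
  have hsmall : ∀ᶠ y in cocompact X, ‖f y‖ < ‖f x₀‖ :=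
    (zero_at_infty f).norm.eventually (gt_mem_nhds (by simpa using norm_pos_iff.mpr hx₀))
  exact f.continuous.norm.exists_forall_ge' x₀ (hsmall.mono fun _ => le_of_lt)

theorem exists_norm_apply_eq_norm {f : C₀(X, E)} (hf : f ≠ 0) : ∃ x, ‖f x‖ = ‖f‖ := by
  obtain ⟨x, hx⟩ := exists_forall_norm_apply_le hf
  exact ⟨x, (f.norm_apply_le x).antisymm
    ((BoundedContinuousFunction.norm_le (norm_nonneg _)).mpr hx)⟩

theorem isCompact_setOf_norm_apply_eq_norm {f : C₀(X, E)} (hf : f ≠ 0) :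
    IsCompact {x | ‖f x‖ = ‖f‖} := by
  refine (f.isCompact_setOf_le_norm_apply (norm_pos_iff.mpr hf)).of_isClosed_subset
    (isClosed_eq f.continuous.norm continuous_const) fun x hx => ?_
  exact (show ‖f x‖ = ‖f‖ from hx).ge

theorem exists_isGreatest_norm_apply_eq_norm [LinearOrder X] [ClosedIciTopology X]
    {f : C₀(X, E)} (hf : f ≠ 0) : ∃ a, IsGreatest {x | ‖f x‖ = ‖f‖} a :=
  (isCompact_setOf_norm_apply_eq_norm hf).exists_isGreatest (exists_norm_apply_eq_norm hf)

end ZeroAtInftyContinuousMap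

theorem talagrand_operator_on_ordinal_space_general
    (Ω : Ordinal)
    (f : ZeroAtInftyContinuousMap ↥(Set.Iio Ω) ℝ) (hf : f ≠ 0) :
    ∃ α : ↥(Set.Iio Ω),
      IsGreatest {β : ↥(Set.Iio Ω) | |f β| = ‖f‖} α ∧
      ∀ h : (↑α + 1 : Ordinal) < Ω, f α - f ⟨↑α + 1, h⟩ ≠ 0 := by
  simp only [← Real.norm_eq_abs]
  obtain ⟨α, hα⟩ := ZeroAtInftyContinuousMap.exists_isGreatest_norm_apply_eq_norm hf
  refine ⟨α, hα, fun h hsame => ?_⟩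
  have hsucc_mem : ‖f ⟨↑α + 1, h⟩‖ = ‖f‖ := by rw [← sub_eq_zero.mp hsame]; exact hα.1
  have hsucc_le : (↑α + 1 : Ordinal) ≤ ↑α := hα.2 hsucc_mem
  exact (Order.lt_add_one_iff.mpr le_rfl).not_ge hsucc_le

/-- if `Ω` is a limit ordinal and `f` is a nonzero element of
`C₀([0,Ω))`, then the set `{α < Ω : |f(α)| = ‖f‖∞}` is nonempty with a greatest
element `α`, and `f(α) − f(α+1) ≠ 0`. -/
theorem talagrand_operator_on_ordinal_space
    (Ω : Ordinal) (hΩ : Order.IsSuccLimit Ω)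
    (f : ZeroAtInftyContinuousMap ↥(Set.Iio Ω) ℝ) (hf : f ≠ 0) :
    ∃ α : ↥(Set.Iio Ω),
      IsGreatest {β : ↥(Set.Iio Ω) | |f β| = ‖f‖} α ∧
      ∀ h : (↑α + 1 : Ordinal) < Ω, f α - f ⟨↑α + 1, h⟩ ≠ 0 :=
  talagrand_operator_on_ordinal_space_general Ω f hf
end
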